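/- Fix an integer n ≥ 1, a mass m > 0 and an exponent γ with 1 < γ ≤ 2, and set s(x) := m^{n(γ−1)/2} x^{γ}/(γ−1) for x ≥ 0. Then for all x > 0 and all y ≥ 0, s(y) − s(x) − s′(x)(y − x) ≥ (γ/2) · m^{n(γ−1)/2} · max(x, y)^{γ−2} · (y − x)², where s′(x) = γ m^{n(γ−1)/2} x^{γ−1}/(γ−1). (Equivalently, the relative pressure s(y|x) is bounded below by (γ/2) m^{n(γ−1)/2} min(x^{γ−2}, y^{γ−2}) (y−x)².) -/

import Mathlib

/-- The isentropic internal-energy (pressure) function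
`s(x) = m^{n(γ−1)/2} x^γ/(γ−1)`. -/
noncomputable def sFn (n : ℕ) (m γ : ℝ) (x : ℝ) : ℝ :=
  m ^ ((n : ℝ) * (γ - 1) / 2) * x ^ γ / (γ - 1)

/-- Its derivative `s′(x) = γ m^{n(γ−1)/2} x^{γ−1}/(γ−1)`. -/
noncomputable def sFn' (n : ℕ) (m γ : ℝ) (x : ℝ) : ℝ :=
  γ * m ^ ((n : ℝ) * (γ - 1) / 2) * x ^ (γ - 1) / (γ - 1)

/-!
With `M = max x y`, the function `t ↦ t ^ γ - γ (γ - 1) / 2 · M ^ (γ - 2) t ^ 2` is convex on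
`[0, M]`: its second derivative `γ (γ - 1) (t ^ (γ - 2) - M ^ (γ - 2))` is nonnegative there
because `γ - 2 ≤ 0`. Its tangent-line inequality at `x`, evaluated at `y` and scaled by
`m ^ (n (γ - 1) / 2) / (γ - 1)`, is the bound.
-/

open Set

theorem ConvexOn.add_mul_sub_le_of_hasDerivAt {S : Set ℝ} {f : ℝ → ℝ} {f' x y : ℝ}
    (hf : ConvexOn ℝ S f) (hx : x ∈ S) (hy : y ∈ S) (hfx : HasDerivAt f f' x) :
    f x + f' * (y - x) ≤ f y := by
  rcases lt_trichotomy x y with hxy | rfl | hyx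
  · have := hf.le_slope_of_hasDerivAt hx hy hxy hfx
    rw [slope_def_field, le_div_iff₀ (sub_pos.2 hxy)] at this
    linarith
  · simp
  · have := hf.slope_le_of_hasDerivAt hy hx hyx hfx
    rw [slope_def_field, div_le_iff₀ (sub_pos.2 hyx)] at this
    linarith

namespace Real

variable {γ : ℝ}

theorem hasDerivAt_rpow_sub_mul_sq (hγ : 1 ≤ γ) (c t : ℝ) :
    HasDerivAt (fun u => u ^ γ - c * u ^ 2) (γ * t ^ (γ - 1) - 2 * c * t) t :=
  ((hasDerivAt_rpow_const (Or.inr hγ)).sub ((hasDerivAt_pow 2 t).const_mul c)).congr_deriv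
    (by norm_num; ring)

theorem convexOn_rpow_sub_mul_sq (hγ : 1 ≤ γ) (hγ2 : γ ≤ 2) (M : ℝ) :
    ConvexOn ℝ (Icc 0 M) (fun t => t ^ γ - γ * (γ - 1) / 2 * M ^ (γ - 2) * t ^ 2) := by
  set c := γ * (γ - 1) / 2 * M ^ (γ - 2)
  have hcont : ContinuousOn (fun t : ℝ => t ^ γ - c * t ^ 2) (Icc 0 M) :=
    ((continuous_rpow_const (by linarith)).sub
      (continuous_const.mul (continuous_pow 2))).continuousOn
  refine convexOn_of_hasDerivWithinAt2_nonneg (convex_Icc 0 M) hcont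
    (f' := fun t => γ * t ^ (γ - 1) - 2 * c * t)
    (f'' := fun t => γ * (γ - 1) * (t ^ (γ - 2) - M ^ (γ - 2)))
    (fun t _ => (hasDerivAt_rpow_sub_mul_sq hγ c t).hasDerivWithinAt)
    (fun t ht => ?_) (fun t ht => ?_)
  · rw [interior_Icc] at ht
    have h := ((hasDerivAt_rpow_const (p := γ - 1) (Or.inl ht.1.ne')).const_mul γ).sub
      ((hasDerivAt_id' t).const_mul (2 * c))
    refine (h.congr_deriv ?_).hasDerivWithinAt
    rw [show γ - 1 - 1 = γ - 2 by ring]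
    ring
  · rw [interior_Icc] at ht
    have hpow : M ^ (γ - 2) ≤ t ^ (γ - 2) := rpow_le_rpow_of_nonpos ht.1 ht.2.le (by linarith)
    have hγ0 : 0 ≤ γ * (γ - 1) := mul_nonneg (by linarith) (by linarith)
    exact mul_nonneg hγ0 (sub_nonneg.2 hpow)

theorem mul_max_rpow_mul_sq_le_rpow_sub_rpow_sub_mul (hγ : 1 ≤ γ) (hγ2 : γ ≤ 2) {x y : ℝ}
    (hx : 0 ≤ x) (hy : 0 ≤ y) :
    γ * (γ - 1) / 2 * max x y ^ (γ - 2) * (y - x) ^ 2 ≤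
      y ^ γ - x ^ γ - γ * x ^ (γ - 1) * (y - x) := by
  have h := (convexOn_rpow_sub_mul_sq hγ hγ2 (max x y)).add_mul_sub_le_of_hasDerivAt
    ⟨hx, le_max_left x y⟩ ⟨hy, le_max_right x y⟩ (hasDerivAt_rpow_sub_mul_sq hγ _ x)
  linarith

end Real

theorem sRel_lower_bound (n : ℕ) (m γ : ℝ) (hm : 0 < m)
    (hγ : 1 < γ) (hγ' : γ ≤ 2) (x y : ℝ) (hx : 0 < x) (hy : 0 ≤ y) :
    sFn n m γ y - sFn n m γ x - sFn' n m γ x * (y - x) ≥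
      γ / 2 * m ^ ((n : ℝ) * (γ - 1) / 2) * max x y ^ (γ - 2) * (y - x) ^ 2 := by
  simp only [sFn, sFn']
  set A := m ^ ((n : ℝ) * (γ - 1) / 2)
  have hγ1 : γ - 1 ≠ 0 := by linarith
  have hc : 0 ≤ A / (γ - 1) := div_nonneg (Real.rpow_nonneg hm.le _) (by linarith)
  calc γ / 2 * A * max x y ^ (γ - 2) * (y - x) ^ 2
      = A / (γ - 1) * (γ * (γ - 1) / 2 * max x y ^ (γ - 2) * (y - x) ^ 2) := by field_simp
    _ ≤ A / (γ - 1) * (y ^ γ - x ^ γ - γ * x ^ (γ - 1) * (y - x)) :=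
        mul_le_mul_of_nonneg_left
          (Real.mul_max_rpow_mul_sq_le_rpow_sub_rpow_sub_mul hγ.le hγ' hx.le hy) hc
    _ = A * y ^ γ / (γ - 1) - A * x ^ γ / (γ - 1)
          - γ * A * x ^ (γ - 1) / (γ - 1) * (y - x) := by ring
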